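/- Let α ∈ (0,2) and let D ⊆ ℝ² be a nonempty bounded open set. Then there exists a constant C > 0 such that for every u ∈ L²(ℝ²) with u = 0 almost everywhere outside D, one has ∫_{ℝ²} u(x)² dx ≤ C ∫_{ℝ²} ∫_{ℝ²} (u(x) − u(y))² / |x−y|^{2+α} dy dx. -/

import Mathlib

open MeasureTheory

noncomputable section

abbrev E2 : Type := EuclideanSpace ℝ (Fin 2)

/-!
Enclose `D` in a ball `B(0, R)` and fix a unit ball `B = B(z, 1)` with `‖z‖ = R + 1`, so that `B`
misses `D` and lies within distance `2R + 2` of every point of `D`. For `x ∈ D` the function `u`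
vanishes on `B`, so the inner Gagliardo integral at `x` is at least
`μ B (2R + 2)^{-s} u(x)²`; integrating in `x` gives the inequality with `C = (2R + 2)^s / μ B`.
-/

open Metric

section FractionalPoincare

variable {E : Type*} [NormedAddCommGroup E] {s : ℝ}

theorem measure_div_mul_le_lintegral_sq_sub_div_rpow [MeasurableSpace E] (μ : Measure E)
    {u : E → ℝ} {x : E} {B : Set E} {d : ℝ} (hs : 0 ≤ s) (hB : MeasurableSet B) (hxB : x ∉ B)
    (hBd : B ⊆ closedBall x d) (hu : ∀ᵐ y ∂μ, y ∈ B → u y = 0) :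
    μ B / ENNReal.ofReal (d ^ s) * ENNReal.ofReal (u x ^ 2) ≤
      ∫⁻ y, ENNReal.ofReal ((u x - u y) ^ 2 / ‖x - y‖ ^ s) ∂μ := by
  calc μ B / ENNReal.ofReal (d ^ s) * ENNReal.ofReal (u x ^ 2)
      = ∫⁻ _ in B, ENNReal.ofReal (u x ^ 2) / ENNReal.ofReal (d ^ s) ∂μ := by
        rw [setLIntegral_const, div_eq_mul_inv, div_eq_mul_inv]
        ring
    _ ≤ ∫⁻ y in B, ENNReal.ofReal ((u x - u y) ^ 2 / ‖x - y‖ ^ s) ∂μ := by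
        refine setLIntegral_mono_ae' hB ?_
        filter_upwards [hu] with y huy hyB
        have hxy : 0 < ‖x - y‖ := norm_sub_pos_iff.mpr (ne_of_mem_of_not_mem hyB hxB).symm
        have hxyd : ‖x - y‖ ≤ d := by rw [← dist_eq_norm]; exact mem_closedBall'.mp (hBd hyB)
        have hd : 0 < d ^ s := Real.rpow_pos_of_pos (hxy.trans_le hxyd) s
        rw [huy hyB, sub_zero, ← ENNReal.ofReal_div_of_pos hd]
        gcongr
    _ ≤ ∫⁻ y, ENNReal.ofReal ((u x - u y) ^ 2 / ‖x - y‖ ^ s) ∂μ := setLIntegral_le_lintegral _ _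

theorem exists_lintegral_sq_le_mul_lintegral_lintegral_sq_sub_div_rpow [NormedSpace ℝ E]
    [Nontrivial E] [ProperSpace E] [MeasurableSpace E] [OpensMeasurableSpace E]
    (μ : Measure E) [μ.IsOpenPosMeasure] [IsFiniteMeasureOnCompacts μ] (hs : 0 ≤ s)
    {D : Set E} (hD : Bornology.IsBounded D) :
    ∃ C : ℝ, 0 < C ∧ ∀ u : E → ℝ, (∀ᵐ x ∂μ, x ∉ D → u x = 0) →
      ∫⁻ x, ENNReal.ofReal (u x ^ 2) ∂μ ≤
        ENNReal.ofReal C * ∫⁻ x, ∫⁻ y, ENNReal.ofReal ((u x - u y) ^ 2 / ‖x - y‖ ^ s) ∂μ ∂μ := by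
  obtain ⟨R, hR, hDR⟩ := hD.subset_ball_lt 0 0
  obtain ⟨z, hz⟩ := exists_norm_eq E (by linarith : (0 : ℝ) ≤ R + 1)
  have hdisj : Disjoint (ball (0 : E) R) (ball z 1) :=
    ball_disjoint_ball (by rw [dist_zero_left, hz])
  have hnear : ∀ x ∈ ball (0 : E) R, ball z 1 ⊆ closedBall x (2 * R + 2) := fun x hx =>
    (ball_subset_ball' (by
      have := dist_le_norm_add_norm z x
      rw [mem_ball, dist_zero_right] at hx
      linarith)).trans ball_subset_closedBall
  set c := μ (ball z 1) / ENNReal.ofReal ((2 * R + 2) ^ s)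
  have hc0 : c ≠ 0 := ENNReal.div_ne_zero.mpr ⟨(measure_ball_pos μ z one_pos).ne', by simp⟩
  have hctop : c ≠ ⊤ := ENNReal.div_ne_top measure_ball_lt_top.ne
    (ENNReal.ofReal_pos.mpr (Real.rpow_pos_of_pos (by linarith) s)).ne'
  refine ⟨c⁻¹.toReal, ENNReal.toReal_pos (ENNReal.inv_ne_zero.mpr hctop)
    (ENNReal.inv_ne_top.mpr hc0), fun u hu => ?_⟩
  have hpointwise : ∀ᵐ x ∂μ, c * ENNReal.ofReal (u x ^ 2) ≤
      ∫⁻ y, ENNReal.ofReal ((u x - u y) ^ 2 / ‖x - y‖ ^ s) ∂μ := by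
    filter_upwards [hu] with x hx
    by_cases hxD : x ∈ D
    · refine measure_div_mul_le_lintegral_sq_sub_div_rpow μ hs measurableSet_ball
        (hdisj.notMem_of_mem_left (hDR hxD)) (hnear x (hDR hxD)) ?_
      filter_upwards [hu] with y hy hyB
      exact hy fun hyD => hdisj.notMem_of_mem_left (hDR hyD) hyB
    · simp [hx hxD]
  calc ∫⁻ x, ENNReal.ofReal (u x ^ 2) ∂μ
      = ∫⁻ x, c⁻¹ * (c * ENNReal.ofReal (u x ^ 2)) ∂μ := by
        simp_rw [← mul_assoc, ENNReal.inv_mul_cancel hc0 hctop, one_mul]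
    _ ≤ ∫⁻ x, c⁻¹ * ∫⁻ y, ENNReal.ofReal ((u x - u y) ^ 2 / ‖x - y‖ ^ s) ∂μ ∂μ :=
        lintegral_mono_ae (hpointwise.mono fun x hx => by gcongr)
    _ = _ := by
        rw [lintegral_const_mul' _ _ (ENNReal.inv_ne_top.mpr hc0),
          ENNReal.ofReal_toReal (ENNReal.inv_ne_top.mpr hc0)]

end FractionalPoincare

theorem statement2_general (α : ℝ) (hα : α ∈ Set.Ioo (0 : ℝ) 2)
    (D : Set E2) (hDb : Bornology.IsBounded D) :
    ∃ C : ℝ, 0 < C ∧ ∀ u : E2 → ℝ, MemLp u 2 volume → (∀ᵐ x, x ∉ D → u x = 0) →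
      ∫⁻ x, ENNReal.ofReal ((u x) ^ 2) ≤
        ENNReal.ofReal C *
          ∫⁻ x, ∫⁻ y, ENNReal.ofReal ((u x - u y) ^ 2 / ‖x - y‖ ^ (2 + α)) := by
  obtain ⟨C, hC, hpoincare⟩ :=
    exists_lintegral_sq_le_mul_lintegral_lintegral_sq_sub_div_rpow volume
      (by linarith [hα.1] : (0 : ℝ) ≤ 2 + α) hDb
  exact ⟨C, hC, fun u _ hu => hpoincare u hu⟩

/-- fractional Poincaré inequality with homogeneous exterior condition: for
`α ∈ (0,2)` and a nonempty bounded open `D ⊆ ℝ²`, there is `C > 0` such that every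
`u ∈ L²(ℝ²)` vanishing a.e. outside `D` satisfies
`∫ u² ≤ C ∫∫ (u(x) − u(y))²/|x−y|^{2+α} dy dx` (the right-hand side may be `+∞`,
whence the use of lower integrals). -/
theorem statement2 (α : ℝ) (hα : α ∈ Set.Ioo (0 : ℝ) 2)
    (D : Set E2) (hDo : IsOpen D) (hDne : D.Nonempty) (hDb : Bornology.IsBounded D) :
    ∃ C : ℝ, 0 < C ∧ ∀ u : E2 → ℝ, MemLp u 2 volume → (∀ᵐ x, x ∉ D → u x = 0) →
      ∫⁻ x, ENNReal.ofReal ((u x) ^ 2) ≤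
        ENNReal.ofReal C *
          ∫⁻ x, ∫⁻ y, ENNReal.ofReal ((u x - u y) ^ 2 / ‖x - y‖ ^ (2 + α)) :=
  statement2_general α hα D hDb
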